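/- The LTS3 scheme preserves steady states: if x* : ι → ℝ satisfies G(x*) = 0 (every component of G vanishes at x*), then for every coarse step Δt and every M ≥ 1, one LTS3 step starting from x⁰ = x* returns x^new = x*. In particular, all interface predictions reproduce x* because each triple of prediction coefficients, (1−α_k−α̃_k, α_k−α̃_k, 2α̃_k), (1−β_k−β̃_k, β_k−β̃_k, 2β̃_k), and (1−γ_k−γ̃_k, γ_k−γ̃_k, 2γ̃_k), sums to 1. -/

import Mathlib

open scoped Classical

/-- The substepping recursion of one LTS3 step. Starting from the state `x0` and the
stage vectors `x1`, `x2`, with coarse step `Δt` and substep count `M`, it returns the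
quintuple `(a^k, P^k, Q^k, R^k, z^{k-1})`: the fine solution after `k` substeps
(meaningful on `F`), the three accumulated interface correction terms (meaningful on
`I₁ ∪ I₂`), and the last third-stage vector `z` computed. -/
noncomputable def lts3Sub {ι : Type*} (F I₁ : Set ι)
    (G : (ι → ℝ) → ι → ℝ) (Δt : ℝ) (M : ℕ) (x0 x1 x2 : ι → ℝ) :
    ℕ → ((ι → ℝ) × (ι → ℝ) × (ι → ℝ) × (ι → ℝ) × (ι → ℝ))
  | 0 => (x0, fun _ => 0, fun _ => 0, fun _ => 0, x0)
  | k + 1 =>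
    let s := lts3Sub F I₁ G Δt M x0 x1 x2 k
    let a := s.1
    let P := s.2.1
    let Q := s.2.2.1
    let R := s.2.2.2.1
    -- interpolation coefficients
    let αk : ℝ := (k : ℝ) / M
    let αt : ℝ := (k : ℝ) ^ 2 / (M : ℝ) ^ 2
    let βk : ℝ := ((k : ℝ) + 1) / M
    let βt : ℝ := (k : ℝ) * ((k : ℝ) + 2) / (M : ℝ) ^ 2
    let γk : ℝ := (2 * (k : ℝ) + 1) / (2 * M)
    let γt : ℝ := (2 * (k : ℝ) ^ 2 + 2 * (k : ℝ) + 1) / (2 * (M : ℝ) ^ 2)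
    -- v^k: a^k on F, the α-interpolant on I₁, x⁰ on I₂ ∪ C
    let v : ι → ℝ := fun i =>
      if i ∈ F then a i
      else if i ∈ I₁ then
        (1 - αk - αt) * x0 i + (αk - αt) * x1 i + 2 * αt * x2 i
      else x0 i
    -- b^k = v^k + (Δt/M)·G(v^k) (used on F)
    let b : ι → ℝ := fun i => v i + (Δt / M) * G v i
    -- w^k: b^k on F, the β-interpolant on I₁, x¹ on I₂ ∪ C
    let w : ι → ℝ := fun i =>
      if i ∈ F then b i
      else if i ∈ I₁ then
        (1 - βk - βt) * x0 i + (βk - βt) * x1 i + 2 * βt * x2 i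
      else x1 i
    -- c^k = (3/4)a^k + (1/4)b^k + (1/4)(Δt/M)·G(w^k) (used on F)
    let c : ι → ℝ := fun i =>
      (3 / 4) * a i + (1 / 4) * b i + (1 / 4) * (Δt / M) * G w i
    -- z^k: c^k on F, the γ-interpolant on I₁, x² on I₂ ∪ C
    let z : ι → ℝ := fun i =>
      if i ∈ F then c i
      else if i ∈ I₁ then
        (1 - γk - γt) * x0 i + (γk - γt) * x1 i + 2 * γt * x2 i
      else x2 i
    (fun i => (1 / 3) * a i + (2 / 3) * c i + (2 / 3) * (Δt / M) * G z i,
     fun i => P i + G v i,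
     fun i => Q i + G w i,
     fun i => R i + G z i,
     z)

/-- One step of the third-order local time-stepping scheme LTS3, with fine region `F`,
fine cells nearest interface 1 `Fu = F̲ ⊆ F`, interface regions `I₁`, `I₂`, coarse
region `C`, right-hand side `G`, coarse step `Δt` and `M` fine substeps per coarse
step. -/
noncomputable def lts3Step {ι : Type*} (F Fu I₁ I₂ C : Set ι)
    (G : (ι → ℝ) → ι → ℝ) (Δt : ℝ) (M : ℕ) (x0 : ι → ℝ) : ι → ℝ :=
  -- x¹ = x⁰ + Δt·G(x⁰) on F̲ ∪ I₁ ∪ I₂ ∪ C, and x¹ = x⁰ on F \ F̲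
  let x1 : ι → ℝ := fun i =>
    if i ∈ F ∧ i ∉ Fu then x0 i else x0 i + Δt * G x0 i
  -- x² = (3/4)x⁰ + (1/4)x¹ + (1/4)Δt·G(x¹) (used on I₁ ∪ I₂ ∪ C)
  let x2 : ι → ℝ := fun i =>
    (3 / 4) * x0 i + (1 / 4) * x1 i + (1 / 4) * Δt * G x1 i
  let s := lts3Sub F I₁ G Δt M x0 x1 x2 M
  fun i =>
    if i ∈ F then s.1 i
    else if i ∈ C then
      (1 / 3) * x0 i + (2 / 3) * x2 i + (2 / 3) * Δt * G s.2.2.2.2 i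
    else
      x0 i + (Δt / M) *
        ((1 / 6) * s.2.1 i + (1 / 6) * s.2.2.1 i + (2 / 3) * s.2.2.2.1 i)

/-! At a steady state `G x* = 0`, every Δt·G-increment vanishes, and every combination the
scheme forms, `(3/4, 1/4)`, `(1/3, 2/3)` and each interpolation triple
`(1 - α - α̃, α - α̃, 2α̃)`, has weights summing to `1`. So `x¹ = x² = x*`, and an induction
over the substeps keeps the fine solution and all predictions at `x*` and the interface
sums `P, Q, R` at `0`. -/

theorem interp_self {R : Type*} [CommRing R] (a b x : R) :
    (1 - a - b) * x + (a - b) * x + 2 * b * x = x := by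
  ring

theorem three_quarters_add_quarter {K : Type*} [Field K] [CharZero K] (x : K) :
    3 / 4 * x + 1 / 4 * x = x := by
  ring

theorem third_add_two_thirds {K : Type*} [Field K] [CharZero K] (x : K) :
    1 / 3 * x + 2 / 3 * x = x := by
  ring

theorem lts3Sub_of_steady {ι : Type*} (F I₁ : Set ι) (G : (ι → ℝ) → ι → ℝ) (Δt : ℝ)
    (M : ℕ) {xs : ι → ℝ} (hxs : ∀ i, G xs i = 0) (k : ℕ) :
    lts3Sub F I₁ G Δt M xs xs xs k = (xs, 0, 0, 0, xs) := by
  induction k with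
  | zero => rfl
  | succ k ih =>
    simp only [lts3Sub, ih, interp_self, ite_self, hxs, mul_zero, add_zero,
      three_quarters_add_quarter, third_add_two_thirds, Pi.zero_apply]
    rfl

theorem lts3_preserves_steady_state_general {ι : Type*}
    (F Fu I₁ I₂ C : Set ι)
    (G : (ι → ℝ) → ι → ℝ)
    (xs : ι → ℝ) (hxs : ∀ i : ι, G xs i = 0) :
    ∀ (Δt : ℝ) (M : ℕ), 1 ≤ M → lts3Step F Fu I₁ I₂ C G Δt M xs = xs := by
  intro Δt M _
  funext i
  simp only [lts3Step, hxs, mul_zero, add_zero, ite_self, three_quarters_add_quarter,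
    lts3Sub_of_steady F I₁ G Δt M hxs M, Pi.zero_apply, third_add_two_thirds]

/-- The LTS3 scheme preserves steady states: if `G(x*) = 0` then one LTS3 step starting
from `x*` returns `x*` for every coarse step `Δt` and every `M ≥ 1`. (In particular all
interface predictions reproduce `x*`, since each triple of prediction coefficients sums
to 1.) -/
theorem lts3_preserves_steady_state {ι : Type*} [Fintype ι]
    (F Fu I₁ I₂ C : Set ι) (hFu : Fu ⊆ F)
    (hcover : ∀ i : ι, i ∈ F ∨ i ∈ I₁ ∨ i ∈ I₂ ∨ i ∈ C)
    (hFI₁ : F ∩ I₁ = ∅) (hFI₂ : F ∩ I₂ = ∅) (hFC : F ∩ C = ∅)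
    (hI₁I₂ : I₁ ∩ I₂ = ∅) (hI₁C : I₁ ∩ C = ∅) (hI₂C : I₂ ∩ C = ∅)
    (G : (ι → ℝ) → ι → ℝ)
    (xs : ι → ℝ) (hxs : ∀ i : ι, G xs i = 0) :
    ∀ (Δt : ℝ) (M : ℕ), 1 ≤ M → lts3Step F Fu I₁ I₂ C G Δt M xs = xs :=
  lts3_preserves_steady_state_general F Fu I₁ I₂ C G xs hxs
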